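/- arXiv:2402.06240 — 7 statements merged into one kernel-verified Lean document; each statement's English description precedes it below -/
import Mathlib

section
/- If G is a finite group and N is a normal subgroup of G such that N \ (N ∩ Z(G)) consists of exactly one G-conjugacy class, then N is a p-group for some prime p and N/(N ∩ Z(G)) is an elementary abelian p-group. -/
/-!
All noncentral elements of `N` are conjugate to `x`, so they share its order `n` and, for every
prime `q ∣ n`, the power `x ^ q` (of order `n / q ≠ n`) must be central. Hence `n` is a power of
the prime `p`, the order of `x` modulo `Z(G)`. A central `y ∈ N` is `x⁻¹ * (x * y)` with commuting
factors of order `n`, so `N` has exponent dividing `n` and is a `p`-group. Finally, the centre of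
the `p`-group `N/(N ∩ Z(G))` is nontrivial, so some noncentral `z ∈ N` commutes with `N` modulo
`Z(G)`; this property passes to all `G`-conjugates of `z`, i.e. to all of `N \ Z(G)`.
-/

def gClass {G : Type*} [Group G] (x : G) : Set G := {y | ∃ g : G, y = g * x * g⁻¹}

open Subgroup
open scoped commutatorElement

theorem IsConj.orderOf_eq {G : Type*} [Group G] {x y : G} (h : IsConj x y) :
    orderOf x = orderOf y := by
  obtain ⟨c, hc⟩ := h
  exact hc.orderOf_eq

theorem IsPGroup.exists_notMem_center_forall_commutatorElement_mem_center {G : Type*} [Group G]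
    [Finite G] {p : ℕ} [Fact p.Prime] {N : Subgroup G} (hN : IsPGroup p N)
    (hNZ : ¬N ≤ center G) : ∃ z ∈ N, z ∉ center G ∧ ∀ v ∈ N, ⁅z, v⁆ ∈ center G := by
  obtain ⟨x, hxN, hxZ⟩ := Set.not_subset.mp hNZ
  let Q := N ⧸ (center G).subgroupOf N
  have : Nontrivial Q :=
    ⟨⟨(⟨x, hxN⟩ : N), 1, by rwa [Ne, QuotientGroup.eq_one_iff, mem_subgroupOf]⟩⟩
  have : Nontrivial (center Q) := (hN.to_quotient _).center_nontrivial
  obtain ⟨c, hc⟩ := exists_ne (1 : center Q)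
  obtain ⟨z, hzc⟩ := QuotientGroup.mk_surjective (c : Q)
  refine ⟨z, z.2, fun hzZ => hc (Subtype.ext ?_), fun v hv => ?_⟩
  · rwa [← hzc, OneMemClass.coe_one, QuotientGroup.eq_one_iff, mem_subgroupOf]
  · have hcomm : ((⁅z, ⟨v, hv⟩⁆ : N) : Q) = 1 := by
      rw [← QuotientGroup.mk'_apply, map_commutatorElement, commutatorElement_eq_one_iff_mul_comm,
        QuotientGroup.mk'_apply, hzc]
      exact (mem_center_iff.mp c.2 _).symm
    rwa [QuotientGroup.eq_one_iff, mem_subgroupOf] at hcomm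

theorem commutatorElement_mem_center_of_isConj {G : Type*} [Group G] {N : Subgroup G} [N.Normal]
    {z a : G} (hza : IsConj z a) (hz : ∀ v ∈ N, ⁅z, v⁆ ∈ center G) {b : G} (hb : b ∈ N) :
    ⁅a, b⁆ ∈ center G := by
  obtain ⟨g, rfl⟩ := isConj_iff.mp hza
  have hconj_b : g * (g⁻¹ * b * g⁻¹⁻¹) * g⁻¹ = b := by group
  rw [← hconj_b, ← conjugate_commutatorElement]
  exact (center G).normal_of_characteristic.conj_mem _ (hz _ (‹N.Normal›.conj_mem b hb g⁻¹)) g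

section SingleNoncentralClass

variable {G : Type*} [Group G] {N : Subgroup G} {x : G}

theorem pow_mem_center_of_prime_dvd_orderOf [Finite G]
    (hconj : ∀ y ∈ N, y ∉ center G → IsConj x y) (hxN : x ∈ N)
    {q : ℕ} (hq : q.Prime) (hqx : q ∣ orderOf x) : x ^ q ∈ center G := by
  by_contra hxq
  have hord : orderOf x / q = orderOf x := by
    rw [← orderOf_pow_of_dvd hq.ne_zero hqx]
    exact (hconj _ (N.pow_mem hxN q) hxq).orderOf_eq.symm
  exact (Nat.div_lt_self (orderOf_pos x) hq.one_lt).ne hord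

theorem orderOf_mk_center_eq_of_prime_dvd_orderOf [Finite G]
    (hconj : ∀ y ∈ N, y ∉ center G → IsConj x y) (hxN : x ∈ N) (hxZ : x ∉ center G)
    {q : ℕ} (hq : q.Prime) (hqx : q ∣ orderOf x) : orderOf (x : G ⧸ center G) = q := by
  have hdvd : orderOf (x : G ⧸ center G) ∣ q := by
    rw [orderOf_dvd_iff_pow_eq_one, ← QuotientGroup.mk_pow, QuotientGroup.eq_one_iff]
    exact pow_mem_center_of_prime_dvd_orderOf hconj hxN hq hqx
  refine (hq.eq_one_or_self_of_dvd _ hdvd).resolve_left fun h1 => hxZ ?_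
  rwa [orderOf_eq_one_iff, QuotientGroup.eq_one_iff] at h1

theorem prime_orderOf_mk_center_and_orderOf_eq_pow [Finite G]
    (hconj : ∀ y ∈ N, y ∉ center G → IsConj x y) (hxN : x ∈ N) (hxZ : x ∉ center G) :
    (orderOf (x : G ⧸ center G)).Prime ∧ ∃ k, orderOf x = orderOf (x : G ⧸ center G) ^ k := by
  have hx1 : orderOf x ≠ 1 := fun h1 => hxZ (orderOf_eq_one_iff.mp h1 ▸ (center G).one_mem)
  obtain ⟨q, hq, hqx⟩ := Nat.exists_prime_and_dvd hx1
  rw [orderOf_mk_center_eq_of_prime_dvd_orderOf hconj hxN hxZ hq hqx]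
  refine ⟨hq, _, Nat.eq_prime_pow_of_unique_prime_dvd (orderOf_pos x).ne' fun hd hdx => ?_⟩
  rw [← orderOf_mk_center_eq_of_prime_dvd_orderOf hconj hxN hxZ hd hdx,
    orderOf_mk_center_eq_of_prime_dvd_orderOf hconj hxN hxZ hq hqx]

theorem pow_orderOf_eq_one_of_mem (hconj : ∀ y ∈ N, y ∉ center G → IsConj x y) (hxN : x ∈ N)
    (hxZ : x ∉ center G) {y : G} (hy : y ∈ N) : y ^ orderOf x = 1 := by
  by_cases hyZ : y ∈ center G
  · have hxyZ : x * y ∉ center G := fun hxy =>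
      hxZ (by simpa using (center G).mul_mem hxy ((center G).inv_mem hyZ))
    have hxy : (x * y) ^ orderOf x = 1 := by
      rw [(hconj _ (N.mul_mem hxN hy) hxyZ).orderOf_eq]
      exact pow_orderOf_eq_one _
    rwa [(show Commute x y from mem_center_iff.mp hyZ x).mul_pow, pow_orderOf_eq_one, one_mul] at hxy
  · rw [(hconj y hy hyZ).orderOf_eq]
    exact pow_orderOf_eq_one y

theorem pow_orderOf_mk_center_mem_center (hconj : ∀ y ∈ N, y ∉ center G → IsConj x y)
    {y : G} (hy : y ∈ N) : y ^ orderOf (x : G ⧸ center G) ∈ center G := by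
  have hxp : x ^ orderOf (x : G ⧸ center G) ∈ center G := by
    rw [← QuotientGroup.eq_one_iff, QuotientGroup.mk_pow, pow_orderOf_eq_one]
  by_cases hyZ : y ∈ center G
  · exact (center G).pow_mem hyZ _
  · rwa [← ((hconj y hy hyZ).pow _).eq_of_left_mem_center (by rwa [← coe_center])]

end SingleNoncentralClass

/-- If `N ⊴ G` and `N \ (N ∩ Z(G))` consists of exactly one `G`-conjugacy class, then `N`
is a `p`-group and `N/(N ∩ Z(G))` is elementary abelian (exponent `p` and abelian mod center). -/
theorem stmt_0 {G : Type*} [Group G] [Fintype G] (N : Subgroup G) [N.Normal]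
    (x : G) (hxN : x ∈ N) (hxZ : x ∉ Subgroup.center G)
    (h : (N : Set G) \ (Subgroup.center G : Set G) = gClass x) :
    ∃ p : ℕ, p.Prime ∧ IsPGroup p N ∧
      (∀ y ∈ N, y ^ p ∈ Subgroup.center G) ∧
      (∀ a ∈ N, ∀ b ∈ N, a * b * a⁻¹ * b⁻¹ ∈ Subgroup.center G) := by
  have hconj : ∀ y ∈ N, y ∉ center G → IsConj x y := fun y hyN hyZ => by
    obtain ⟨g, rfl⟩ : y ∈ gClass x := h ▸ ⟨hyN, hyZ⟩
    exact isConj_iff.mpr ⟨g, rfl⟩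
  obtain ⟨hp, k, hk⟩ := prime_orderOf_mk_center_and_orderOf_eq_pow hconj hxN hxZ
  have : Fact (orderOf (x : G ⧸ center G)).Prime := ⟨hp⟩
  have hN : IsPGroup (orderOf (x : G ⧸ center G)) N := fun y =>
    ⟨k, Subtype.ext (by simpa [← hk] using pow_orderOf_eq_one_of_mem hconj hxN hxZ y.2)⟩
  obtain ⟨z, hzN, hzZ, hz⟩ :=
    hN.exists_notMem_center_forall_commutatorElement_mem_center fun hNZ => hxZ (hNZ hxN)
  refine ⟨_, hp, hN, fun y hy => pow_orderOf_mk_center_mem_center hconj hy, fun a ha b hb => ?_⟩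
  rw [← commutatorElement_def]
  by_cases haZ : a ∈ center G
  · rw [commutatorElement_eq_one_iff_mul_comm.mpr (mem_center_iff.mp haZ b).symm]
    exact (center G).one_mem
  · exact commutatorElement_mem_center_of_isConj
      ((hconj z hzN hzZ).symm.trans (hconj a ha haZ)) hz hb
end

section
/- Let N be a normal subgroup of a finite group G such that N has exactly two non-central G-conjugacy classes A and B (i.e., G-classes of elements of N not in Z(G)), and suppose |A| and |B| are coprime. Then Z(G) ∩ N = 1. -/
section

variable {G : Type*} [Group G]

lemma Subgroup.card_dvd_ncard_of_mul_mem (K : Subgroup G) {S : Set G}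
    (h : ∀ s ∈ S, ∀ k ∈ K, s * k ∈ S) : Nat.card K ∣ S.ncard := by
  have hS : S = QuotientGroup.mk ⁻¹' (QuotientGroup.mk '' S : Set (G ⧸ K)) := by
    ext g
    refine ⟨fun hg => ⟨g, hg, rfl⟩, ?_⟩
    rintro ⟨s, hs, hsg⟩
    simpa using h s hs _ (QuotientGroup.eq.mp hsg)
  refine ⟨(QuotientGroup.mk '' S : Set (G ⧸ K)).ncard, ?_⟩
  conv_lhs => rw [hS]
  rw [← Nat.card_coe_set_eq, ← Nat.card_coe_set_eq,
    Nat.card_congr (QuotientGroup.preimageMkEquivSubgroupProdSet K _), Nat.card_prod]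

lemma mem_gClass_self (x : G) : x ∈ gClass x := ⟨1, by simp⟩

lemma mem_center_of_ncard_gClass_eq_one {x : G} (h : (gClass x).ncard = 1) :
    x ∈ Subgroup.center G := by
  obtain ⟨a, ha⟩ := Set.ncard_eq_one.mp h
  refine Subgroup.mem_center_iff.mpr fun g => ?_
  have hx : x = a := by simpa [ha] using mem_gClass_self x
  have hgx : g * x * g⁻¹ ∈ gClass x := ⟨g, rfl⟩
  rwa [ha, Set.mem_singleton_iff, ← hx, mul_inv_eq_iff_eq_mul] at hgx

lemma gClass_mul_of_mem_center (x : G) {z : G} (hz : z ∈ Subgroup.center G) :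
    gClass (x * z) = (· * z) '' gClass x := by
  have hzc := Subgroup.mem_center_iff.mp hz
  ext w
  constructor
  · rintro ⟨g, rfl⟩
    refine ⟨g * x * g⁻¹, ⟨g, rfl⟩, ?_⟩
    simp only [mul_assoc, ← hzc g⁻¹]
  · rintro ⟨v, ⟨g, rfl⟩, rfl⟩
    refine ⟨g, ?_⟩
    simp only [mul_assoc, ← hzc g⁻¹]

lemma ncard_gClass_mul_of_mem_center (x : G) {z : G} (hz : z ∈ Subgroup.center G) :
    (gClass (x * z)).ncard = (gClass x).ncard := by
  rw [gClass_mul_of_mem_center x hz]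
  exact Set.ncard_image_of_injective _ (mul_left_injective z)

lemma card_dvd_ncard_gClass {K : Subgroup G} (hK : K ≤ Subgroup.center G) {u : G}
    (h : ∀ z ∈ K, gClass (u * z) = gClass u) : Nat.card K ∣ (gClass u).ncard :=
  K.card_dvd_ncard_of_mul_mem fun s hs z hz => by
    rw [← h z hz, gClass_mul_of_mem_center u (hK hz)]
    exact ⟨s, hs, rfl⟩

end

theorem stmt_2_general {G : Type*} [Group G] (N : Subgroup G)
    (x y : G) (hxN : x ∈ N) (hyN : y ∈ N)
    (hxZ : x ∉ Subgroup.center G) (hyZ : y ∉ Subgroup.center G)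
    (hall : ∀ w ∈ N, w ∉ Subgroup.center G → gClass w = gClass x ∨ gClass w = gClass y)
    (hcop : Nat.Coprime (gClass x).ncard (gClass y).ncard) :
    Subgroup.center G ⊓ N = ⊥ := by
  have hdiff : (gClass x).ncard ≠ (gClass y).ncard := fun h =>
    hxZ (mem_center_of_ncard_gClass_eq_one ((Nat.coprime_self _).mp (h ▸ hcop)))
  have stable : ∀ u ∈ N, u ∉ Subgroup.center G →
      ∀ z ∈ Subgroup.center G ⊓ N, gClass (u * z) = gClass u := by
    intro u huN huZ z ⟨hzZ, hzN⟩
    have huzZ : u * z ∉ Subgroup.center G := fun h =>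
      huZ (((Subgroup.center G).mul_mem_cancel_right hzZ).mp h)
    have hcard := ncard_gClass_mul_of_mem_center u hzZ
    rcases hall (u * z) (N.mul_mem huN hzN) huzZ with h | h <;>
      rcases hall u huN huZ with h' | h' <;> rw [h, h'] at hcard ⊢
    exacts [(hdiff hcard).elim, (hdiff hcard.symm).elim]
  have hdvd := Nat.dvd_gcd (card_dvd_ncard_gClass inf_le_left (stable x hxN hxZ))
    (card_dvd_ncard_gClass inf_le_left (stable y hyN hyZ))
  rw [hcop.gcd_eq_one, Nat.dvd_one] at hdvd
  exact Subgroup.card_eq_one.mp hdvd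

/-- If the normal subgroup `N` has exactly two non-central `G`-conjugacy classes, whose sizes
are coprime, then `Z(G) ∩ N = 1`. -/
theorem stmt_2 {G : Type*} [Group G] [Fintype G] (N : Subgroup G) [N.Normal]
    (x y : G) (hxN : x ∈ N) (hyN : y ∈ N)
    (hxZ : x ∉ Subgroup.center G) (hyZ : y ∉ Subgroup.center G)
    (hne : gClass x ≠ gClass y)
    (hall : ∀ w ∈ N, w ∉ Subgroup.center G → gClass w = gClass x ∨ gClass w = gClass y)
    (hcop : Nat.Coprime (gClass x).ncard (gClass y).ncard) :
    Subgroup.center G ⊓ N = ⊥ :=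
  stmt_2_general N x y hxN hyN hxZ hyZ hall hcop
end

section
/- If G is a finite group and x ∈ G is such that the conjugacy class x^G is real (i.e., closed under inversion) and |x^G| is odd, then x² = 1. -/
open Function

theorem Function.Involutive.exists_isFixedPt_of_odd_card {α : Type*} [Fintype α] {f : α → α}
    (hf : Involutive f) (hodd : Odd (Fintype.card α)) : ∃ a, IsFixedPt f a :=
  Equiv.Perm.exists_fixed_point_of_prime (p := 2) (n := 1) (σ := hf.toPerm)
    hodd.not_two_dvd_nat (Equiv.ext hf)

theorem Set.exists_isFixedPt_of_involutive_of_odd_ncard {α : Type*} {s : Set α} {f : α → α}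
    (hf : Involutive f) (hmaps : MapsTo f s s) (hodd : Odd s.ncard) :
    ∃ a ∈ s, IsFixedPt f a := by
  -- `ncard` of an infinite set is `0`, which is even.
  have hfin : s.Finite := Set.finite_of_ncard_pos hodd.pos
  have := hfin.fintype
  have hodd' : Odd (Fintype.card s) := by rwa [← Nat.card_eq_fintype_card, Nat.card_coe_set_eq]
  have hinv : Involutive (hmaps.restrict f s s) := fun b => Subtype.ext (hf b)
  obtain ⟨⟨a, ha⟩, hfix⟩ := hinv.exists_isFixedPt_of_odd_card hodd'
  exact ⟨a, ha, congrArg Subtype.val hfix⟩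

theorem sq_eq_one_of_conj_inv_eq_self {G : Type*} [Group G] {g x : G}
    (h : (g * x * g⁻¹)⁻¹ = g * x * g⁻¹) : x ^ 2 = 1 := by
  rw [conj_inv, mul_left_inj, mul_right_inj] at h
  rw [pow_two, mul_eq_one_iff_eq_inv, h]

theorem stmt_3_general {G : Type*} [Group G] (x : G)
    (hreal : ∀ y ∈ gClass x, y⁻¹ ∈ gClass x)
    (hodd : Odd (gClass x).ncard) :
    x ^ 2 = 1 := by
  obtain ⟨_, ⟨g, rfl⟩, hfix⟩ :=
    Set.exists_isFixedPt_of_involutive_of_odd_ncard inv_involutive hreal hodd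
  exact sq_eq_one_of_conj_inv_eq_self hfix

/-- If the conjugacy class of `x` is real and has odd size, then `x ^ 2 = 1`. -/
theorem stmt_3 {G : Type*} [Group G] [Fintype G] (x : G)
    (hreal : ∀ y ∈ gClass x, y⁻¹ ∈ gClass x)
    (hodd : Odd (gClass x).ncard) :
    x ^ 2 = 1 :=
  stmt_3_general x hreal hodd
end

section
/- Let G be a finite group such that G has exactly three non-central conjugacy classes and the sizes of these three classes are pairwise non-coprime. Then |Z(G)| ≤ 2. -/
section aux
variable {G : Type*} [Group G]

lemma gClass_eq_of_mem {x y : G} (h : y ∈ gClass x) : gClass y = gClass x := by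
  obtain ⟨g, rfl⟩ := h
  ext z
  constructor
  · rintro ⟨h, rfl⟩; exact ⟨h * g, by group⟩
  · rintro ⟨h, rfl⟩; exact ⟨h * g⁻¹, by group⟩

lemma gClass_disjoint {x y : G} (h : gClass x ≠ gClass y) : Disjoint (gClass x) (gClass y) := by
  rw [Set.disjoint_left]
  intro z hzx hzy
  exact h ((gClass_eq_of_mem hzx).symm.trans (gClass_eq_of_mem hzy))

lemma gClass_disjoint_center {x : G} (hx : x ∉ Subgroup.center G) :
    Disjoint (Subgroup.center G : Set G) (gClass x) := by
  rw [Set.disjoint_right]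
  rintro z ⟨g, rfl⟩ hzin
  apply hx
  have h2 := (Subgroup.center G).normal_of_characteristic.conj_mem _ hzin g⁻¹
  have h3 : g⁻¹ * (g * x * g⁻¹) * g⁻¹⁻¹ = x := by group
  rwa [h3] at h2

lemma gClass_eq_orbit (x : G) : gClass x = MulAction.orbit (ConjAct G) x := by
  ext y
  rw [ConjAct.mem_orbit_conjAct, isConj_iff]
  simp only [gClass, Set.mem_setOf_eq]
  constructor
  · rintro ⟨g, rfl⟩; exact ⟨g⁻¹, by group⟩
  · rintro ⟨g, rfl⟩; exact ⟨g⁻¹, by group⟩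

/-- if `K ≤ L`, `x ∈ L`, `x ∉ K` then `2 * |K| ≤ |L|`. -/
lemma two_mul_card_le {G : Type*} [Group G] [Finite G] {K L : Subgroup G}
    (hKL : K ≤ L) {x : G} (hxL : x ∈ L) (hxK : x ∉ K) :
    2 * Nat.card K ≤ Nat.card L := by
  have h1 : Nat.card (K.subgroupOf L) = Nat.card K :=
    Nat.card_congr (Subgroup.subgroupOfEquivOfLe hKL).toEquiv
  have h2 : (K.subgroupOf L).index * Nat.card (K.subgroupOf L) = Nat.card L :=
    Subgroup.index_mul_card _
  have h3 : K.subgroupOf L ≠ ⊤ := by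
    intro h
    apply hxK
    have : (⟨x, hxL⟩ : L) ∈ K.subgroupOf L := h ▸ Subgroup.mem_top _
    simpa [Subgroup.mem_subgroupOf] using this
  have h4 : 2 ≤ (K.subgroupOf L).index := Subgroup.one_lt_index_of_ne_top h3
  calc 2 * Nat.card K = 2 * Nat.card (K.subgroupOf L) := by rw [h1]
    _ ≤ (K.subgroupOf L).index * Nat.card (K.subgroupOf L) :=
        Nat.mul_le_mul_right _ h4
    _ = Nat.card L := h2

lemma key_facts [Fintype G] {x : G} (hx : x ∉ Subgroup.center G) :
    2 ≤ (gClass x).ncard ∧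
      2 * Nat.card (Subgroup.center G) * (gClass x).ncard ≤ Nat.card G ∧
      4 * Nat.card (Subgroup.center G) ≤ Nat.card G := by
  classical
  set S := MulAction.stabilizer (ConjAct G) x with hS
  -- orbit stabilizer
  have horb : (gClass x).ncard * Nat.card S = Nat.card G := by
    have e := MulAction.orbitProdStabilizerEquivGroup (ConjAct G) x
    have := Nat.card_congr e
    rw [Nat.card_prod] at this
    rw [gClass_eq_orbit, ← Nat.card_coe_set_eq]
    exact this.trans (Nat.card_congr ConjAct.ofConjAct.toEquiv)
  -- center embeds with index ≥ 2 in stabilizer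
  have hZS : 2 * Nat.card (Subgroup.center G) ≤ Nat.card S := by
    have hmap : Nat.card ↥((Subgroup.center G).map (ConjAct.toConjAct (G := G)).toMonoidHom)
        = Nat.card (Subgroup.center G) :=
      Nat.card_congr (Subgroup.equivMapOfInjective _ _
        (MulEquiv.injective ConjAct.toConjAct)).symm.toEquiv
    rw [← hmap]
    apply two_mul_card_le (L := S) ?_ (x := ConjAct.toConjAct x) ?_ ?_
    · rintro g ⟨z, hz, rfl⟩
      have hzc := Subgroup.mem_center_iff.mp hz x
      simp only [MulEquiv.coe_toMonoidHom]
      rw [hS, MulAction.mem_stabilizer_iff, ConjAct.toConjAct_smul, ← hzc]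
      group
    · rw [MulAction.mem_stabilizer_iff, ConjAct.toConjAct_smul]; group
    · intro h
      obtain ⟨z, hz, hzx⟩ := h
      exact hx (by rwa [(MulEquiv.injective ConjAct.toConjAct) hzx] at hz)
  have hk2 : 2 ≤ (gClass x).ncard := by
    obtain ⟨g, hg⟩ : ∃ g : G, g * x ≠ x * g := by
      by_contra h; push_neg at h; exact hx (Subgroup.mem_center_iff.mpr h)
    have h1 : 1 < (gClass x).ncard := by
      refine (Set.one_lt_ncard_iff (Set.toFinite _)).mpr ⟨g * x * g⁻¹, x, ⟨g, rfl⟩,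
        mem_gClass_self x, ?_⟩
      intro h
      exact hg (by rw [mul_inv_eq_iff_eq_mul] at h; rw [h])
    omega
  refine ⟨hk2, ?_, ?_⟩
  · calc 2 * Nat.card (Subgroup.center G) * (gClass x).ncard
        ≤ Nat.card S * (gClass x).ncard := Nat.mul_le_mul_right _ hZS
      _ = Nat.card G := by rw [mul_comm]; exact horb
  · calc 4 * Nat.card (Subgroup.center G) = 2 * (2 * Nat.card (Subgroup.center G)) := by ring
      _ ≤ (gClass x).ncard * Nat.card S := Nat.mul_le_mul hk2 hZS
      _ = Nat.card G := horb

end aux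

/-- If `G` has exactly three non-central conjugacy classes whose sizes are pairwise
non-coprime, then `|Z(G)| ≤ 2`. -/
theorem stmt_5 {G : Type*} [Group G] [Fintype G] (a b c : G)
    (haZ : a ∉ Subgroup.center G) (hbZ : b ∉ Subgroup.center G) (hcZ : c ∉ Subgroup.center G)
    (hab : gClass a ≠ gClass b) (hac : gClass a ≠ gClass c) (hbc : gClass b ≠ gClass c)
    (hall : ∀ w : G, w ∉ Subgroup.center G →
      gClass w = gClass a ∨ gClass w = gClass b ∨ gClass w = gClass c)
    (nab : ¬ Nat.Coprime (gClass a).ncard (gClass b).ncard)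
    (nac : ¬ Nat.Coprime (gClass a).ncard (gClass c).ncard)
    (nbc : ¬ Nat.Coprime (gClass b).ncard (gClass c).ncard) :
    Nat.card (Subgroup.center G) ≤ 2 := by
  classical
  set z := Nat.card (Subgroup.center G) with hz
  set n := Nat.card G with hn
  obtain ⟨hka, hA, hn4⟩ := key_facts haZ
  obtain ⟨hkb, hB, -⟩ := key_facts hbZ
  obtain ⟨hkc, hC, -⟩ := key_facts hcZ
  -- partition of G
  have hcover : (Set.univ : Set G) =
      (Subgroup.center G : Set G) ∪ gClass a ∪ gClass b ∪ gClass c := by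
    ext w
    simp only [Set.mem_univ, true_iff, Set.mem_union, SetLike.mem_coe]
    by_cases hw : w ∈ Subgroup.center G
    · tauto
    · have hmem : w ∈ gClass a ∨ w ∈ gClass b ∨ w ∈ gClass c := by
        rcases hall w hw with h | h | h
        exacts [Or.inl (h ▸ mem_gClass_self w), Or.inr (Or.inl (h ▸ mem_gClass_self w)),
          Or.inr (Or.inr (h ▸ mem_gClass_self w))]
      tauto
  have dZA := gClass_disjoint_center haZ
  have dZB := gClass_disjoint_center hbZ
  have dZC := gClass_disjoint_center hcZ
  have dAB := gClass_disjoint hab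
  have dAC := gClass_disjoint hac
  have dBC := gClass_disjoint hbc
  have hsum : n = z + (gClass a).ncard + (gClass b).ncard + (gClass c).ncard := by
    have h1 : n = (Set.univ : Set G).ncard := (Set.ncard_univ G).symm
    rw [h1, hcover,
      Set.ncard_union_eq (by simp [Set.disjoint_union_left, dZC, dAC, dBC]),
      Set.ncard_union_eq (by simp [Set.disjoint_union_left, dZB, dAB]),
      Set.ncard_union_eq dZA]
    have hzz : ((Subgroup.center G : Set G)).ncard = z := by
      rw [← Nat.card_coe_set_eq]; rfl
    rw [hzz]
  by_contra hcon
  push_neg at hcon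
  have hz3 : 3 ≤ z := hcon
  nlinarith [hA, hB, hC, hn4, hsum, hz3, hka, hkb, hkc]
end

section
/- Let G be a finite group and x = x_p x_q a product of its commuting p-part and q-part (p ≠ q primes, both nontrivial). If |x_p^G| and |x_q^G| are coprime, then G = C_G(x_p) C_G(x_q) and |x^G| = |x_p^G| · |x_q^G|. -/
lemma gClass_ncard_eq_index {G : Type*} [Group G] [Fintype G] (x : G) :
    (gClass x).ncard = (Subgroup.centralizer {x}).index := by
  have h1 : gClass x = MulAction.orbit (ConjAct G) x := by
    ext y
    rw [ConjAct.mem_orbit_conjAct, isConj_comm, isConj_iff]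
    exact ⟨fun ⟨g, h⟩ => ⟨g, h.symm⟩, fun ⟨g, h⟩ => ⟨g, h.symm⟩⟩
  rw [h1, ← MulAction.index_stabilizer, Subgroup.centralizer_eq_comap_stabilizer]
  exact (Subgroup.index_comap_of_surjective (H := MulAction.stabilizer (ConjAct G) x)
    ConjAct.toConjAct.surjective).symm

lemma index_inf_eq_of_coprime {G : Type*} [Group G] [Fintype G] (H K : Subgroup G)
    (h : Nat.Coprime H.index K.index) : (H ⊓ K).index = H.index * K.index := by
  have h1 : H.index ∣ (H ⊓ K).index := Subgroup.index_dvd_of_le inf_le_left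
  have h2 : K.index ∣ (H ⊓ K).index := Subgroup.index_dvd_of_le inf_le_right
  have h4 : H.index * K.index ∣ (H ⊓ K).index := h.mul_dvd_of_dvd_of_dvd h1 h2
  have h5 : (H ⊓ K).index ≠ 0 := Subgroup.index_ne_zero_of_finite
  exact Nat.le_antisymm Subgroup.index_inf_le
    (Nat.le_of_dvd (Nat.pos_of_ne_zero h5) h4)

lemma exists_mul_of_index_inf {G : Type*} [Group G] [Fintype G] (H K : Subgroup G)
    (h : (H ⊓ K).index = H.index * K.index) (g : G) :
    ∃ a ∈ H, ∃ b ∈ K, g = a * b := by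
  -- the natural map `H ⧸ (K.subgroupOf H) → G ⧸ K`
  let f : H ⧸ K.subgroupOf H → G ⧸ K :=
    Quotient.map' (Subtype.val) (fun a b hab => by
      rw [QuotientGroup.leftRel_apply] at hab ⊢
      exact hab)
  have hinj : Function.Injective f := by
    refine Quotient.ind₂' ?_
    intro a b hab
    have : ((a : G))⁻¹ * (b : G) ∈ K := by
      rwa [← QuotientGroup.eq]
    apply Quotient.sound'
    rw [QuotientGroup.leftRel_apply]
    exact this
  -- cardinality computation
  have hHpos : H.index ≠ 0 := Subgroup.index_ne_zero_of_finite
  have hrel : K.relIndex H = K.index := by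
    have e1 : (H ⊓ K).relIndex H * H.index = (H ⊓ K).index :=
      Subgroup.relIndex_mul_index inf_le_left
    rw [Subgroup.inf_relIndex_left, h, mul_comm] at e1
    exact Nat.eq_of_mul_eq_mul_left (Nat.pos_of_ne_zero hHpos) e1
  have hcard : Nat.card (H ⧸ K.subgroupOf H) = Nat.card (G ⧸ K) := by
    rw [← Subgroup.index_eq_card, ← Subgroup.index_eq_card]
    exact hrel
  have hbij : Function.Bijective f :=
    (Nat.bijective_iff_injective_and_card f).mpr ⟨hinj, hcard⟩
  obtain ⟨z, hz⟩ := hbij.2 (QuotientGroup.mk g)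
  obtain ⟨a, rfl⟩ := Quotient.exists_rep z
  have : ((a : G))⁻¹ * g ∈ K := by
    rw [← QuotientGroup.eq]
    exact hz
  exact ⟨a, a.2, (a : G)⁻¹ * g, this, by group⟩

lemma centralizer_mul_eq_inf {G : Type*} [Group G] [Fintype G] {xp xq : G}
    (hcomm : Commute xp xq) (hcop : Nat.Coprime (orderOf xp) (orderOf xq)) :
    Subgroup.centralizer {xp * xq} =
      Subgroup.centralizer {xp} ⊓ Subgroup.centralizer {xq} := by
  obtain ⟨c, hc1, hc2⟩ := Nat.chineseRemainder hcop 1 0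
  have hpow : (xp * xq) ^ c = xp := by
    rw [hcomm.mul_pow]
    have h1 : xp ^ c = xp ^ 1 := pow_eq_pow_iff_modEq.mpr hc1
    have h2 : xq ^ c = xq ^ 0 := pow_eq_pow_iff_modEq.mpr hc2
    rw [h1, h2, pow_one, pow_zero, mul_one]
  ext g
  simp only [Subgroup.mem_inf, Subgroup.mem_centralizer_singleton_iff]
  constructor
  · intro hg
    have hx : Commute (xp * xq) g := (hg : Commute g (xp * xq)).symm
    have hxp : Commute xp g := by
      have := hx.pow_left c
      rwa [hpow] at this
    have hxq : Commute xq g := by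
      have : Commute (xp⁻¹ * (xp * xq)) g := (hxp.inv_left).mul_left hx
      rwa [inv_mul_cancel_left] at this
    exact ⟨hxp.symm, hxq.symm⟩
  · rintro ⟨h1, h2⟩
    exact (Commute.mul_right (h1 : Commute g xp) (h2 : Commute g xq) : Commute g (xp * xq))

/-- If `x = x_p * x_q` with commuting nontrivial `p`-part and `q`-part, and `|x_p^G|` and
`|x_q^G|` are coprime, then `G = C_G(x_p) C_G(x_q)` and `|x^G| = |x_p^G| ⬝ |x_q^G|`. -/
theorem stmt_9 {G : Type*} [Group G] [Fintype G]
    (p q : ℕ) (hp : p.Prime) (hq : q.Prime) (hpq : p ≠ q)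
    (xp xq : G) (hcomm : Commute xp xq)
    (hxp1 : xp ≠ 1) (hxq1 : xq ≠ 1)
    (hxp : ∃ a : ℕ, orderOf xp = p ^ a) (hxq : ∃ b : ℕ, orderOf xq = q ^ b)
    (hcop : Nat.Coprime (gClass xp).ncard (gClass xq).ncard) :
    (∀ g : G, ∃ a ∈ Subgroup.centralizer {xp}, ∃ b ∈ Subgroup.centralizer {xq}, g = a * b) ∧
      (gClass (xp * xq)).ncard = (gClass xp).ncard * (gClass xq).ncard := by
  obtain ⟨a, ha⟩ := hxp
  obtain ⟨b, hb⟩ := hxq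
  have hordcop : Nat.Coprime (orderOf xp) (orderOf xq) := by
    rw [ha, hb]
    exact Nat.Coprime.pow _ _ ((Nat.coprime_primes hp hq).mpr hpq)
  have hcent := centralizer_mul_eq_inf hcomm hordcop
  rw [gClass_ncard_eq_index, gClass_ncard_eq_index] at hcop
  have hinf := index_inf_eq_of_coprime (Subgroup.centralizer {xp})
    (Subgroup.centralizer {xq}) hcop
  constructor
  · intro g
    exact exists_mul_of_index_inf _ _ hinf g
  · rw [gClass_ncard_eq_index, gClass_ncard_eq_index, gClass_ncard_eq_index, hcent]
    exact hinf
end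

section
/- Let N be a finite normal subgroup of G such that N \ (Z(G) ∩ N) is partitioned into exactly three G-conjugacy classes x_p^G, x_q^G, x^G, where x_p has order p, x_q has order q (distinct primes), and x = x_p x_q has order pq. Then Z(G) ∩ N = 1 and N is a {p,q}-group. -/
private lemma orderOf_mem_gClass {G : Type*} [Group G] {y x : G} (h : y ∈ gClass x) :
    orderOf y = orderOf x := by
  obtain ⟨g, rfl⟩ := h
  simpa using (MulAut.conj g).orderOf_eq x

private lemma mem_center_of_pow {G : Type*} [Group G] {x : G} {n : ℕ}
    (hx : orderOf x ≠ 0) (h : x ^ n ∈ Subgroup.center G)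
    (hco : Nat.Coprime n (orderOf x)) : x ∈ Subgroup.center G := by
  rcases eq_or_lt_of_le (Nat.one_le_iff_ne_zero.mpr hx) with h1 | h1
  · have : x = 1 := orderOf_eq_one_iff.mp h1.symm
    rw [this]; exact Subgroup.one_mem _
  · obtain ⟨m, -, hm⟩ := Nat.exists_mul_mod_eq_one_of_coprime hco h1
    have : x = (x ^ n) ^ m := by
      rw [← pow_mul, ← pow_mod_orderOf, hm, pow_one]
    rw [this]
    exact Subgroup.pow_mem _ h m

/-- If `N \ (Z(G) ∩ N)` is partitioned into exactly the three `G`-classes `x_p^G`, `x_q^G`,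
`x^G` with `x = x_p x_q` of orders `p`, `q`, `pq`, then `Z(G) ∩ N = 1` and `N` is a
`{p,q}`-group. -/
theorem stmt_16 {G : Type*} [Group G] [Fintype G] (N : Subgroup G) [N.Normal]
    (p q : ℕ) (hp : p.Prime) (hq : q.Prime) (hpq : p ≠ q)
    (xp xq : G) (hcomm : Commute xp xq)
    (hxpN : xp ∈ N) (hxqN : xq ∈ N)
    (hop : orderOf xp = p) (hoq : orderOf xq = q) (hopq : orderOf (xp * xq) = p * q)
    (hxpZ : xp ∉ Subgroup.center G) (hxqZ : xq ∉ Subgroup.center G)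
    (hxZ : xp * xq ∉ Subgroup.center G)
    (h1 : gClass xp ≠ gClass xq) (h2 : gClass xp ≠ gClass (xp * xq))
    (h3 : gClass xq ≠ gClass (xp * xq))
    (hall : ∀ w ∈ N, w ∉ Subgroup.center G →
      w ∈ gClass xp ∪ gClass xq ∪ gClass (xp * xq)) :
    Subgroup.center G ⊓ N = ⊥ ∧
      ∀ r : ℕ, r.Prime → r ∣ Nat.card N → r = p ∨ r = q := by
  have hp1 : p ≠ 1 := hp.ne_one
  have hq1 : q ≠ 1 := hq.ne_one
  have hcopq : Nat.Coprime p q := (Nat.coprime_primes hp hq).mpr hpq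
  -- orders of elements of the three classes
  have horder : ∀ w : G, w ∈ gClass xp ∪ gClass xq ∪ gClass (xp * xq) →
      orderOf w = p ∨ orderOf w = q ∨ orderOf w = p * q := by
    rintro w ((h | h) | h)
    · exact Or.inl ((orderOf_mem_gClass h).trans hop)
    · exact Or.inr (Or.inl ((orderOf_mem_gClass h).trans hoq))
    · exact Or.inr (Or.inr ((orderOf_mem_gClass h).trans hopq))
  have hbot : Subgroup.center G ⊓ N = ⊥ := by
    rw [Subgroup.eq_bot_iff_forall]
    intro z hz
    obtain ⟨hzZ, hzN⟩ := hz
    by_contra hz1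
    have hoz : orderOf z ≠ 1 := fun h => hz1 (orderOf_eq_one_iff.mp h)
    obtain ⟨r, hr, hrdvd⟩ := Nat.exists_prime_and_dvd hoz
    set z' := z ^ (orderOf z / r) with hz'def
    have hozpos : orderOf z ≠ 0 := (orderOf_pos z).ne'
    have hoz' : orderOf z' = r := orderOf_pow_orderOf_div hozpos hrdvd
    have hz'Z : z' ∈ Subgroup.center G := Subgroup.pow_mem _ hzZ _
    have hz'comm : ∀ g : G, Commute z' g := fun g =>
      (Subgroup.mem_center_iff.mp hz'Z g).symm
    -- helper: if z' * y not central has order o, o ∈ {p,q,pq}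
    have key : ∀ y : G, y ∈ N → y ∉ Subgroup.center G →
        z' * y ∈ gClass xp ∪ gClass xq ∪ gClass (xp * xq) := by
      intro y hyN hyZ
      refine hall _ (N.mul_mem (Subgroup.pow_mem _ hzN _) hyN) ?_
      intro hmem
      exact hyZ (by simpa using Subgroup.mul_mem _ (Subgroup.inv_mem _ hz'Z) hmem)
    rcases eq_or_ne r q with hrq | hrq
    · -- r = q : look at z' * xp, order q * p, must be conjugate to xp*xq
      have hord : orderOf (z' * xp) = q * p := by
        rw [(hz'comm xp).orderOf_mul_eq_mul_orderOf_of_coprime, hoz', hop, hrq]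
        rw [hoz', hop, hrq]; exact hcopq.symm
      have hmem := key xp hxpN hxpZ
      rcases hmem with (h | h) | h
      · have hh := (orderOf_mem_gClass h).trans hop
        rw [hord] at hh
        exact hq1 (Nat.eq_of_mul_eq_mul_right hp.pos (by rw [hh, one_mul]))
      · have hh := (orderOf_mem_gClass h).trans hoq
        rw [hord] at hh
        exact hp1 (Nat.eq_of_mul_eq_mul_left hq.pos (by rw [hh, mul_one]))
      · obtain ⟨g, hg⟩ := h
        -- take p-th power
        have hpow : (z' * xp) ^ p = z' ^ p := by
          rw [(hz'comm xp).mul_pow, ← hop, pow_orderOf_eq_one, mul_one]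
        have hpow2 : (g * (xp * xq) * g⁻¹) ^ p = g * xq ^ p * g⁻¹ := by
          rw [conj_pow, hcomm.mul_pow, ← hop, pow_orderOf_eq_one, one_mul]
        have hxqp : xq ^ p = g⁻¹ * z' ^ p * g := by
          have : z' ^ p = g * xq ^ p * g⁻¹ := by rw [← hpow, hg, hpow2]
          rw [this]; group
        have hxqpZ : xq ^ p ∈ Subgroup.center G := by
          rw [hxqp]
          have hc := Subgroup.pow_mem _ hz'Z p
          have h' := Subgroup.mem_center_iff.mp hc g
          have heq : g⁻¹ * z' ^ p * g = z' ^ p := by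
            rw [mul_assoc, ← h', ← mul_assoc, inv_mul_cancel, one_mul]
          rw [heq]; exact hc
        exact hxqZ (mem_center_of_pow (by rw [hoq]; exact hq.ne_zero) hxqpZ
          (by rw [hoq]; exact hcopq))
    rcases eq_or_ne r p with hrp | hrp
    · -- r = p : look at z' * xq, order p * q, must be conjugate to xp*xq
      have hord : orderOf (z' * xq) = p * q := by
        rw [(hz'comm xq).orderOf_mul_eq_mul_orderOf_of_coprime, hoz', hoq, hrp]
        rw [hoz', hoq, hrp]; exact hcopq
      have hmem := key xq hxqN hxqZ
      rcases hmem with (h | h) | h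
      · have hh := (orderOf_mem_gClass h).trans hop
        rw [hord] at hh
        exact hq1 (Nat.eq_of_mul_eq_mul_left hp.pos (by rw [hh, mul_one]))
      · have hh := (orderOf_mem_gClass h).trans hoq
        rw [hord] at hh
        exact hp1 (Nat.eq_of_mul_eq_mul_right hq.pos (by rw [hh, one_mul]))
      · obtain ⟨g, hg⟩ := h
        have hpow : (z' * xq) ^ q = z' ^ q := by
          rw [(hz'comm xq).mul_pow, ← hoq, pow_orderOf_eq_one, mul_one]
        have hpow2 : (g * (xp * xq) * g⁻¹) ^ q = g * xp ^ q * g⁻¹ := by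
          rw [conj_pow, hcomm.mul_pow, ← hoq, pow_orderOf_eq_one, mul_one]
        have hxpq : xp ^ q = g⁻¹ * z' ^ q * g := by
          have : z' ^ q = g * xp ^ q * g⁻¹ := by rw [← hpow, hg, hpow2]
          rw [this]; group
        have hxpqZ : xp ^ q ∈ Subgroup.center G := by
          rw [hxpq]
          have hc := Subgroup.pow_mem _ hz'Z q
          have h' := Subgroup.mem_center_iff.mp hc g
          have heq : g⁻¹ * z' ^ q * g = z' ^ q := by
            rw [mul_assoc, ← h', ← mul_assoc, inv_mul_cancel, one_mul]
          rw [heq]; exact hc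
        exact hxpZ (mem_center_of_pow (by rw [hop]; exact hp.ne_zero) hxpqZ
          (by rw [hop]; exact hcopq.symm))
    · -- r ∉ {p, q} : z' * xp has order r * p, impossible
      have hcorp : Nat.Coprime r p := (Nat.coprime_primes hr hp).mpr hrp
      have hcorq : Nat.Coprime r q := (Nat.coprime_primes hr hq).mpr hrq
      have hord : orderOf (z' * xp) = r * p := by
        rw [(hz'comm xp).orderOf_mul_eq_mul_orderOf_of_coprime, hoz', hop]
        rw [hoz', hop]; exact hcorp
      have hmem := key xp hxpN hxpZ
      rcases horder _ hmem with h | h | h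
      · rw [hord] at h
        exact hr.ne_one (Nat.eq_of_mul_eq_mul_right hp.pos (by rw [h, one_mul]))
      · rw [hord] at h
        have : r ∣ q := ⟨p, by rw [← h, mul_comm]⟩
        have : p ∣ q := ⟨r, by rw [← h, mul_comm]⟩
        exact hpq ((Nat.prime_dvd_prime_iff_eq hp hq).mp this)
      · rw [hord] at h
        have : r = q := by
          have hpp : p ≠ 0 := hp.ne_zero
          exact Nat.eq_of_mul_eq_mul_right (Nat.pos_of_ne_zero hpp)
            (by rw [h, mul_comm])
        exact hrq this
  refine ⟨hbot, ?_⟩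
  intro r hr hrdvd
  have : Fintype N := Fintype.ofFinite _
  have : Fact r.Prime := ⟨hr⟩
  obtain ⟨y, hy⟩ := exists_prime_orderOf_dvd_card (G := N) r
    (by rwa [← Nat.card_eq_fintype_card])
  have hyG : orderOf (y : G) = r := by rw [Subgroup.orderOf_coe, hy]
  have hy1 : (y : G) ≠ 1 := by
    intro h
    rw [h, orderOf_one] at hyG
    exact hr.ne_one hyG.symm
  have hyZ : (y : G) ∉ Subgroup.center G := by
    intro h
    have : (y : G) ∈ Subgroup.center G ⊓ N := ⟨h, y.2⟩
    rw [hbot] at this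
    exact hy1 this
  rcases horder _ (hall _ y.2 hyZ) with h | h | h
  · left; rw [← hyG, h]
  · right; rw [← hyG, h]
  · rw [hyG] at h
    exfalso
    have hpr : p ∣ r := ⟨q, h⟩
    have : p = r := ((Nat.prime_dvd_prime_iff_eq hp hr).mp hpr)
    rw [← this] at h
    have : q = 1 := Nat.eq_of_mul_eq_mul_left hp.pos (by rw [← h, mul_one])
    exact hq1 this
end

section
/- Let N ⊴ G be finite groups and suppose N contains a normal subgroup M ⊴ G with M elementary abelian of order p^a such that M \ {1} is one G-class, K := N (with |N| = p^a q) satisfies N \ M is a single G-class of q-elements. Then a Sylow q-subgroup Q of N acts fixed-point-freely on M (i.e., N is a Frobenius group with kernel M) and Q is cyclic of order q. Moreover the G-class sizes in N are 1, p^a − 1, and p^a(q − 1). -/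
/-! An element `y ∈ N \ M` is a `q`-element of the group `N` of order `p^a q`, so its order
divides `q` and is therefore `q`. If `y` centralised some `m ∈ M \ {1}`, then `y m ∈ N \ M`
would also have order `q`, and `(y m)^q = y^q m^q` would force `m^q = 1`, contradicting
`orderOf m = p ≠ q`. The class sizes are just `|M \ {1}|` and `|N \ M|`. -/

namespace Subgroup

variable {G : Type*} [Group G]

theorem ncard_diff_of_le {H K : Subgroup G} (hHK : H ≤ K) [Finite H] :
    ((K : Set G) \ H).ncard = Nat.card K - Nat.card H := by
  rw [Set.ncard_sdiff hHK, ← Nat.card_coe_set_eq, ← Nat.card_coe_set_eq]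
  rfl

theorem ncard_diff_one (H : Subgroup G) :
    ((H : Set G) \ {1}).ncard = Nat.card H - 1 := by
  rw [← coe_bot, ncard_diff_of_le bot_le, card_bot]

theorem orderOf_eq_prime_of_coprime {N : Subgroup G} {m q : ℕ} (hq : q.Prime)
    (hN : Nat.card N = m * q) {y : G} (hyN : y ∈ N) (hy : y ≠ 1)
    (hcop : (orderOf y).Coprime m) : orderOf y = q := by
  have hdvd : orderOf y ∣ m * q := hN ▸ N.orderOf_dvd_natCard hyN
  exact (hq.eq_one_or_self_of_dvd _ (hcop.dvd_of_dvd_mul_left hdvd)).resolve_left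
    (mt orderOf_eq_one_iff.mp hy)

end Subgroup

theorem stmt_18_general {G : Type*} [Group G]
    (N M : Subgroup G) (hMN : M ≤ N)
    (p q : ℕ) (hp : p.Prime) (hq : q.Prime) (hpq : p ≠ q) (a : ℕ)
    (hM : Nat.card M = p ^ a)
    (hMel : ∀ x ∈ M, x ≠ 1 → orderOf x = p)
    (hN : Nat.card N = p ^ a * q)
    (x₀ y₀ : G)
    (hMclass : (M : Set G) \ {1} = gClass x₀)
    (hNclass : (N : Set G) \ (M : Set G) = gClass y₀)
    (hqelts : ∀ y : G, y ∈ (N : Set G) \ (M : Set G) → ∃ b : ℕ, orderOf y = q ^ b) :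
    (∀ y ∈ N, y ∉ M → ∀ m ∈ M, y * m * y⁻¹ = m → m = 1) ∧
      (∀ y ∈ N, y ∉ M → orderOf y = q) ∧
      (gClass x₀).ncard = p ^ a - 1 ∧
      (gClass y₀).ncard = p ^ a * (q - 1) := by
  have : Finite M := Nat.finite_of_card_ne_zero (by simp [hM, hp.ne_zero])
  have horder : ∀ y ∈ N, y ∉ M → orderOf y = q := by
    intro y hyN hyM
    obtain ⟨b, hb⟩ := hqelts y ⟨hyN, hyM⟩
    refine Subgroup.orderOf_eq_prime_of_coprime hq hN hyN (fun h ↦ hyM (h ▸ M.one_mem)) ?_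
    rw [hb]
    exact ((Nat.coprime_primes hq hp).2 hpq.symm).pow b a
  have hpow_q : ∀ y ∈ N, y ∉ M → y ^ q = 1 := fun y hyN hyM ↦
    horder y hyN hyM ▸ pow_orderOf_eq_one y
  have hfree : ∀ y ∈ N, y ∉ M → ∀ m ∈ M, y * m * y⁻¹ = m → m = 1 := by
    intro y hyN hyM m hmM hym
    by_contra hm
    have hymN : y * m ∈ N := N.mul_mem hyN (hMN hmM)
    have hymM : y * m ∉ M := fun h ↦ hyM (by simpa using M.mul_mem h (M.inv_mem hmM))
    have hcomm : Commute y m := mul_inv_eq_iff_eq_mul.mp hym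
    have hmq : m ^ q = 1 := by
      calc m ^ q = y ^ q * m ^ q := by rw [hpow_q y hyN hyM, one_mul]
        _ = (y * m) ^ q := (hcomm.mul_pow q).symm
        _ = 1 := hpow_q _ hymN hymM
    have hpq_dvd : p ∣ q := hMel m hmM hm ▸ orderOf_dvd_of_pow_eq_one hmq
    exact hpq ((Nat.prime_dvd_prime_iff_eq hp hq).1 hpq_dvd)
  refine ⟨hfree, horder, ?_, ?_⟩
  · rw [← hMclass, M.ncard_diff_one, hM]
  · rw [← hNclass, Subgroup.ncard_diff_of_le hMN, hN, hM, Nat.mul_sub_one]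

/-- If `M ⊴ G` is an elementary abelian Sylow `p`-subgroup of `N ⊴ G` of order `p^a`, with
`M \ {1}` a single `G`-class and `N \ M` a single `G`-class of `q`-elements, where
`|N| = p^a q`, then `N` is Frobenius with kernel `M`, every element of `N \ M` has order
`q`, and the `G`-class sizes in `N` are `1`, `p^a - 1` and `p^a (q - 1)`. -/
theorem stmt_18 {G : Type*} [Group G] [Fintype G]
    (N M : Subgroup G) [N.Normal] [M.Normal] (hMN : M ≤ N)
    (p q : ℕ) (hp : p.Prime) (hq : q.Prime) (hpq : p ≠ q) (a : ℕ) (ha : 1 ≤ a)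
    (hM : Nat.card M = p ^ a)
    (hMab : ∀ x ∈ M, ∀ y ∈ M, x * y = y * x)
    (hMel : ∀ x ∈ M, x ≠ 1 → orderOf x = p)
    (hN : Nat.card N = p ^ a * q)
    (x₀ y₀ : G)
    (hMclass : (M : Set G) \ {1} = gClass x₀)
    (hNclass : (N : Set G) \ (M : Set G) = gClass y₀)
    (hqelts : ∀ y : G, y ∈ (N : Set G) \ (M : Set G) → ∃ b : ℕ, orderOf y = q ^ b) :
    (∀ y ∈ N, y ∉ M → ∀ m ∈ M, y * m * y⁻¹ = m → m = 1) ∧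
      (∀ y ∈ N, y ∉ M → orderOf y = q) ∧
      (gClass x₀).ncard = p ^ a - 1 ∧
      (gClass y₀).ncard = p ^ a * (q - 1) :=
  stmt_18_general N M hMN p q hp hq hpq a hM hMel hN x₀ y₀ hMclass hNclass hqelts
end
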